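/- Let N ≥ 1 and let S := {n ∈ ℤ : 1 ≤ |n| ≤ N}. Define Ψ₁(n,m) := (1/2)(|n| + |m| − |n−m|) for n,m ∈ S. Then for every v : S → ℂ, ∑_{n,m ∈ S} v_n·conj(v_m)·(Ψ₁(n,m))² ≥ ∑_{n,m ∈ S} v_n·conj(v_m)·Ψ₁(n,m) (both sides being real). That is, at γ = 1 the matrix Ψ₁ over all nonzero frequencies in [−N,N] is block diagonal (the cross-sign block vanishes), and the curvature on real trigonometric polynomials of degree ≤ N satisfies κ_real(1,N) = κ_pos(1,N) = 1. -/

import Mathlib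

/-- The Fourier-space carré du champ kernel of the γ-stable generator. -/
noncomputable def Psi (γ ξ η : ℝ) : ℝ :=
  (1 / 2) * (|ξ| ^ γ + |η| ^ γ - |ξ - η| ^ γ)

/-! For integers, `Ψ₁(n, m) = p + q` with `p = max (min n m) 0`, `q = max (min (-n) (-m)) 0`
and `p q = 0`, so `Ψ₁² - Ψ₁ = (p² - p) + (q² - q)`. Since `p² - p = ∑_{k < p} 2k` and, for `k ≥ 0`,
`k < p ↔ k < n ∧ k < m`, on `[-N, N]` the kernel `Ψ₁² - Ψ₁` equals
`∑_{k < N} ∑_{σ = ±1} 2k 1[k < σ n] 1[k < σ m]`, a nonnegative combination of rank-one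
kernels. Its Hermitian form is therefore `∑_{k < N} 2k (|∑_{n > k} vₙ|² + |∑_{n < -k} vₙ|²) ≥ 0`. -/

open Finset ComplexConjugate

section KernelForm

variable {ι : Type*}

def kernelForm (s : Finset ι) (K : ι → ι → ℝ) (v : ι → ℂ) : ℂ :=
  ∑ n ∈ s, ∑ m ∈ s, v n * conj (v m) * K n m

theorem kernelForm_sub (s : Finset ι) (K L : ι → ι → ℝ) (v : ι → ℂ) :
    kernelForm s K v - kernelForm s L v = kernelForm s (fun n m ↦ K n m - L n m) v := by
  simp only [kernelForm, ← sum_sub_distrib, Complex.ofReal_sub, mul_sub]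

theorem kernelForm_eq_sum_mul_normSq {κ : Type*} (s : Finset ι) (t : Finset κ) (c : κ → ℝ)
    (a : κ → ι → ℝ) (v : ι → ℂ) :
    kernelForm s (fun n m ↦ ∑ k ∈ t, c k * (a k n * a k m)) v
      = ∑ k ∈ t, (c k : ℂ) * Complex.normSq (∑ n ∈ s, a k n * v n) := by
  symm
  simp_rw [← Complex.mul_conj, map_sum, map_mul, Complex.conj_ofReal, sum_mul_sum, mul_sum]
  rw [kernelForm, sum_comm]
  refine sum_congr rfl fun n _ ↦ ?_
  rw [sum_comm]
  refine sum_congr rfl fun m _ ↦ ?_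
  rw [Complex.ofReal_sum, mul_sum]
  refine sum_congr rfl fun k _ ↦ ?_
  push_cast
  ring

theorem re_kernelForm_nonneg_of_eq_sum {κ : Type*} {s : Finset ι} {K : ι → ι → ℝ}
    (t : Finset κ) (c : κ → ℝ) (a : κ → ι → ℝ) (hc : ∀ k ∈ t, 0 ≤ c k)
    (hK : ∀ n ∈ s, ∀ m ∈ s, K n m = ∑ k ∈ t, c k * (a k n * a k m)) (v : ι → ℂ) :
    0 ≤ (kernelForm s K v).re := by
  have hK' : kernelForm s K v = kernelForm s (fun n m ↦ ∑ k ∈ t, c k * (a k n * a k m)) v :=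
    sum_congr rfl fun n hn ↦ sum_congr rfl fun m hm ↦ by rw [hK n hn m hm]
  rw [hK', kernelForm_eq_sum_mul_normSq, Complex.re_sum]
  refine sum_nonneg fun k hk ↦ ?_
  rw [← Complex.ofReal_mul, Complex.ofReal_re]
  exact mul_nonneg (hc k hk) (Complex.normSq_nonneg _)

end KernelForm

theorem sum_range_two_mul (p : ℕ) : ∑ k ∈ range p, (2 * k : ℝ) = (p : ℝ) ^ 2 - p := by
  induction p with
  | zero => simp
  | succ p ih => rw [sum_range_succ, ih]; push_cast; ring

theorem Psi_one_intCast (n m : ℤ) :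
    Psi 1 n m = ((max (min n m) 0 + max (min (-n) (-m)) 0 : ℤ) : ℝ) := by
  have h : |n| + |m| - |n - m| = 2 * (max (min n m) 0 + max (min (-n) (-m)) 0) := by
    simp only [abs_eq_max_neg]; omega
  have h' := congrArg (Int.cast : ℤ → ℝ) h
  push_cast at h'
  simp only [Psi, Real.rpow_one]
  push_cast
  linarith

theorem sq_sub_self_max_min_eq_sum (N : ℕ) {n m : ℤ} (hn : n ≤ N) (hm : m ≤ N) :
    ((max (min n m) 0 : ℤ) : ℝ) ^ 2 - (max (min n m) 0 : ℤ)
      = ∑ k ∈ range N, 2 * (k : ℝ) *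
          ((if (k : ℤ) < n then 1 else 0) * (if (k : ℤ) < m then 1 else 0)) := by
  obtain ⟨p, hp⟩ : ∃ p : ℕ, max (min n m) 0 = p := Int.eq_ofNat_of_zero_le (le_max_right _ _)
  have hpN : p ≤ N := by omega
  rw [hp, Int.cast_natCast, ← sum_range_two_mul]
  symm
  calc _ = ∑ k ∈ range p, 2 * (k : ℝ) *
          ((if (k : ℤ) < n then 1 else 0) * (if (k : ℤ) < m then 1 else 0)) := by
        refine (sum_subset (range_subset_range.2 hpN) fun k _ hk ↦ ?_).symm
        rw [mem_range] at hk
        split_ifs <;> first | omega | ring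
    _ = ∑ k ∈ range p, 2 * (k : ℝ) := sum_congr rfl fun k hk ↦ by
        rw [mem_range] at hk
        rw [if_pos (by omega), if_pos (by omega), mul_one, mul_one]

theorem Psi_one_sq_sub_self_eq_sum (N : ℕ) {n m : ℤ} (hn : |n| ≤ N) (hm : |m| ≤ N) :
    Psi 1 n m ^ 2 - Psi 1 n m = ∑ kσ ∈ range N ×ˢ {1, -1}, 2 * (kσ.1 : ℝ) *
      ((if (kσ.1 : ℤ) < kσ.2 * n then 1 else 0) * (if (kσ.1 : ℤ) < kσ.2 * m then 1 else 0)) := by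
  rw [abs_le] at hn hm
  have hpq : max (min n m) 0 * max (min (-n) (-m)) 0 = 0 := by
    rcases le_total (min n m) 0 with h | h
    · rw [max_eq_right h, zero_mul]
    · rw [max_eq_right (by omega : min (-n) (-m) ≤ 0), mul_zero]
  rw [Psi_one_intCast, sum_product]
  simp_rw [sum_pair (by norm_num : (1 : ℤ) ≠ -1), one_mul, neg_one_mul, sum_add_distrib]
  rw [← sq_sub_self_max_min_eq_sum N hn.2 hm.2,
    ← sq_sub_self_max_min_eq_sum N (by omega : -n ≤ N) (by omega : -m ≤ N)]
  generalize max (min n m) 0 = p, max (min (-n) (-m)) 0 = q at hpq ⊢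
  have hpq' : (p : ℝ) * q = 0 := by exact_mod_cast hpq
  push_cast
  linear_combination 2 * hpq'

theorem real_curvature_one_general (N : ℕ) (v : ℤ → ℂ) :
    (∑ n ∈ (Finset.Icc (-(N : ℤ)) (N : ℤ)).erase 0,
      ∑ m ∈ (Finset.Icc (-(N : ℤ)) (N : ℤ)).erase 0,
        v n * (starRingEnd ℂ) (v m) * ((Psi 1 (n : ℝ) (m : ℝ) : ℝ) : ℂ)).re
      ≤ (∑ n ∈ (Finset.Icc (-(N : ℤ)) (N : ℤ)).erase 0,
        ∑ m ∈ (Finset.Icc (-(N : ℤ)) (N : ℤ)).erase 0,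
          v n * (starRingEnd ℂ) (v m) * ((Psi 1 (n : ℝ) (m : ℝ) : ℝ) : ℂ) ^ 2).re := by
  set S := (Icc (-(N : ℤ)) N).erase 0
  have hS : ∀ n ∈ S, |n| ≤ N := fun n hn ↦ abs_le.2 (mem_Icc.1 (mem_of_mem_erase hn))
  have hform := re_kernelForm_nonneg_of_eq_sum (s := S)
    (K := fun n m : ℤ ↦ Psi 1 n m ^ 2 - Psi 1 n m) (range N ×ˢ {1, -1})
    (fun kσ ↦ 2 * (kσ.1 : ℝ)) (fun kσ n ↦ if (kσ.1 : ℤ) < kσ.2 * n then 1 else 0)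
    (fun _ _ ↦ by positivity) (fun n hn m hm ↦ Psi_one_sq_sub_self_eq_sum N (hS n hn) (hS m hm)) v
  rw [← kernelForm_sub, Complex.sub_re, sub_nonneg] at hform
  simpa only [kernelForm, Complex.ofReal_pow] using hform

/-- **Curvature 1 on real trigonometric polynomials at γ = 1.** Over the full
frequency set `S = {n ∈ ℤ : 1 ≤ |n| ≤ N}` (positive and negative frequencies),
the Hermitian form of the Hadamard square of `Ψ₁` dominates that of `Ψ₁`:
this is the Bakry–Émery condition `Γ_{1,2}(f,f) ≥ Γ_1(f,f)` for real
trigonometric polynomials of degree ≤ N, i.e. `κ_real(1,N) = κ_pos(1,N) = 1`. -/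
theorem real_curvature_one (N : ℕ) (hN : 1 ≤ N) (v : ℤ → ℂ) :
    (∑ n ∈ (Finset.Icc (-(N : ℤ)) (N : ℤ)).erase 0,
      ∑ m ∈ (Finset.Icc (-(N : ℤ)) (N : ℤ)).erase 0,
        v n * (starRingEnd ℂ) (v m) * ((Psi 1 (n : ℝ) (m : ℝ) : ℝ) : ℂ)).re
      ≤ (∑ n ∈ (Finset.Icc (-(N : ℤ)) (N : ℤ)).erase 0,
        ∑ m ∈ (Finset.Icc (-(N : ℤ)) (N : ℤ)).erase 0,
          v n * (starRingEnd ℂ) (v m) * ((Psi 1 (n : ℝ) (m : ℝ) : ℝ) : ℂ) ^ 2).re :=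
  real_curvature_one_general N v
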